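/- arXiv:1410.4662 — 3 statements merged into one kernel-verified Lean document; each statement's English description precedes it below -/
import Mathlib

section
/- Let M be an invariant submanifold of a generalized Kenmotsu manifold M̄. Then the intrinsic curvature tensor R of M satisfies R(X,Y)ξ_i = Σⱼ { η^j(Y) φ²X - η^j(X) φ²Y } for all X, Y tangent to M. -/
open scoped RealInnerProductSpace

/-!
Put `Z = ξᵢ` in the Gauss–Codazzi equation. Since `h(·, ξᵢ) = 0`, the shape-operator terms and
the normal-derivative terms vanish, and the remaining `h`-terms are `h(Y, ∇_X ξᵢ) = -h(Y, φ²X)`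
and `h(X, ∇_Y ξᵢ) = -h(X, φ²Y)`. As `φ²X = -X + Σⱼ ηʲ(X) ξⱼ`, these equal `h(Y, X)` and `h(X, Y)`,
which cancel by symmetry of `h`. Hence `R(X,Y)ξᵢ = R̄(X,Y)ξᵢ`.
-/

theorem map_phi_phi_eq_neg_of_map_xi_eq_zero {R M N ι : Type*} [CommRing R]
    [AddCommGroup M] [Module R M] [AddCommGroup N] [Module R N] [Fintype ι]
    (φ : M →ₗ[R] M) (ξ : ι → M) (η : ι → M →ₗ[R] R)
    (hφ2 : ∀ X, φ (φ X) = -X + ∑ i, η i X • ξ i)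
    (f : M →ₗ[R] N) (hf : ∀ i, f (ξ i) = 0) (X : M) :
    f (φ (φ X)) = -f X := by
  simp [hφ2, hf]

theorem invariant_submanifold_curvature_xi_general
    {V : Type*} [NormedAddCommGroup V] [InnerProductSpace ℝ V]
    (s : ℕ) (φ : V →ₗ[ℝ] V) (ξ : Fin s → V) (η : Fin s → V →ₗ[ℝ] ℝ)
    (T : Submodule ℝ V)
    (D : V → V → V) (h : V →ₗ[ℝ] V →ₗ[ℝ] V)
    -- almost s-contact metric structure on the ambient manifold
    (hφ2 : ∀ X, φ (φ X) = -X + ∑ i, η i X • ξ i)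
    -- M is an invariant submanifold : φ preserves tangent (and normal) parts, ξᵢ tangent
    (hξT : ∀ i, ξ i ∈ T)
    -- Gauss formula : ∇̄_X Y = ∇_X Y + h(X,Y), with ∇ tangential and h normal valued
    (hDT : ∀ X ∈ T, ∀ Y ∈ T, D X Y ∈ T)
    (hsymm : ∀ X Y, h X Y = h Y X)
    (Rbar R : V → V → V → V) (A : V → V → V) (Dp : V → V → V)
    (hhξ : ∀ X ∈ T, ∀ i, h X (ξ i) = 0)
    (hDξ : ∀ X ∈ T, ∀ i, D X (ξ i) = -(φ (φ X)))
    -- ambient curvature identity R̄(X,Y)ξᵢ = Σⱼ{ηʲ(Y)φ²X - ηʲ(X)φ²Y}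
    (hRbarξ : ∀ X ∈ T, ∀ Y ∈ T, ∀ i, Rbar X Y (ξ i) = ∑ j, (η j Y • φ (φ X) - η j X • φ (φ Y)))
    -- Gauss–Codazzi relation between the ambient and induced curvature tensors
    (hCodazzi : ∀ X ∈ T, ∀ Y ∈ T, ∀ Z ∈ T, Rbar X Y Z = R X Y Z - A (h Y Z) X + A (h X Z) Y
      + (Dp X (h Y Z) - h (D X Y) Z - h Y (D X Z)) - (Dp Y (h X Z) - h (D Y X) Z - h X (D Y Z)))
    (hA0 : ∀ X, A 0 X = 0)
    (hDp0 : ∀ X, Dp X 0 = 0)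
    : ∀ X ∈ T, ∀ Y ∈ T, ∀ i,
      R X Y (ξ i) = ∑ j, (η j Y • φ (φ X) - η j X • φ (φ Y)) := by
  intro X hX Y hY i
  have h_Dξ : ∀ U ∈ T, ∀ W ∈ T, h W (D U (ξ i)) = h W U := by
    intro U hU W hW
    rw [hDξ U hU i, map_neg,
      map_phi_phi_eq_neg_of_map_xi_eq_zero φ ξ η hφ2 (h W) (hhξ W hW), neg_neg]
  have hC := hCodazzi X hX Y hY (ξ i) (hξT i)
  rw [hhξ X hX i, hhξ Y hY i, hA0, hA0, hDp0, hDp0, hhξ _ (hDT X hX Y hY) i,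
    hhξ _ (hDT Y hY X hX) i, h_Dξ X hX Y hY, h_Dξ Y hY X hX, hsymm Y X] at hC
  calc R X Y (ξ i) = Rbar X Y (ξ i) := by rw [hC]; abel
    _ = _ := hRbarξ X hX Y hY i

/-- Invariant submanifold of a generalized Kenmotsu manifold: the induced curvature satisfies `R(X,Y)ξᵢ = Σⱼ{ηʲ(Y)φ²X - ηʲ(X)φ²Y}`. -/
theorem invariant_submanifold_curvature_xi
    {V : Type*} [NormedAddCommGroup V] [InnerProductSpace ℝ V]
    (s : ℕ) (φ : V →ₗ[ℝ] V) (ξ : Fin s → V) (η : Fin s → V →ₗ[ℝ] ℝ)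
    (T : Submodule ℝ V)
    (Dbar D : V → V → V) (h : V →ₗ[ℝ] V →ₗ[ℝ] V)
    -- almost s-contact metric structure on the ambient manifold
    (hφ2 : ∀ X, φ (φ X) = -X + ∑ i, η i X • ξ i)
    (hηξ : ∀ i j, η i (ξ j) = if i = j then (1 : ℝ) else 0)
    (hg : ∀ X Y, ⟪φ X, φ Y⟫ = ⟪X, Y⟫ - ∑ i, η i X * η i Y)
    (hηg : ∀ i X, η i X = ⟪X, ξ i⟫)
    -- generalized Kenmotsu condition : (∇̄_X φ) Y = Σᵢ { g(φX,Y)ξᵢ - ηⁱ(Y)φX }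
    (hKen : ∀ X Y, Dbar X (φ Y) - φ (Dbar X Y) =
      ∑ i, (⟪φ X, Y⟫ • ξ i - η i Y • φ X))
    -- M is an invariant submanifold : φ preserves tangent (and normal) parts, ξᵢ tangent
    (hφT : ∀ x ∈ T, φ x ∈ T)
    (hφN : ∀ x, (∀ Z ∈ T, ⟪x, Z⟫ = 0) → ∀ Z ∈ T, ⟪φ x, Z⟫ = 0)
    (hξT : ∀ i, ξ i ∈ T)
    -- Gauss formula : ∇̄_X Y = ∇_X Y + h(X,Y), with ∇ tangential and h normal valued
    (hGauss : ∀ X ∈ T, ∀ Y ∈ T, Dbar X Y = D X Y + h X Y)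
    (hDT : ∀ X ∈ T, ∀ Y ∈ T, D X Y ∈ T)
    (hhN : ∀ X ∈ T, ∀ Y ∈ T, ∀ Z ∈ T, ⟪h X Y, Z⟫ = 0)
    (hsymm : ∀ X Y, h X Y = h Y X)
    (Rbar R : V → V → V → V) (A : V → V → V) (Dp : V → V → V)
    (hhξ : ∀ X ∈ T, ∀ i, h X (ξ i) = 0)
    (hDξ : ∀ X ∈ T, ∀ i, D X (ξ i) = -(φ (φ X)))
    -- ambient curvature identity R̄(X,Y)ξᵢ = Σⱼ{ηʲ(Y)φ²X - ηʲ(X)φ²Y}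
    (hRbarξ : ∀ X ∈ T, ∀ Y ∈ T, ∀ i, Rbar X Y (ξ i) = ∑ j, (η j Y • φ (φ X) - η j X • φ (φ Y)))
    -- Gauss–Codazzi relation between the ambient and induced curvature tensors
    (hCodazzi : ∀ X ∈ T, ∀ Y ∈ T, ∀ Z ∈ T, Rbar X Y Z = R X Y Z - A (h Y Z) X + A (h X Z) Y
      + (Dp X (h Y Z) - h (D X Y) Z - h Y (D X Z)) - (Dp Y (h X Z) - h (D Y X) Z - h X (D Y Z)))
    (hA0 : ∀ X, A 0 X = 0)
    (hDp0 : ∀ X, Dp X 0 = 0)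
    : ∀ X ∈ T, ∀ Y ∈ T, ∀ i,
      R X Y (ξ i) = ∑ j, (η j Y • φ (φ X) - η j X • φ (φ Y)) :=
  invariant_submanifold_curvature_xi_general s φ ξ η T D h hφ2 hξT hDT hsymm Rbar R A Dp hhξ hDξ
    hRbarξ hCodazzi hA0 hDp0
end

section
/- Let M be an invariant submanifold of a generalized Kenmotsu manifold M̄. Then the second fundamental form h is η-parallel (i.e. (∇_X h)(φY, φZ) = 0 for all tangent X, Y, Z) if and only if (∇_X h)(Y,Z) = -Σᵢ { η^i(Y) h(X,Z) + η^i(Z) h(X,Y) } for all tangent X, Y, Z. -/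
/-!
On an invariant submanifold `h(φU, φW) = -h(U, W)`, and the induced Kenmotsu formula together with
`h(·, ξᵢ) = 0` gives `h(∇_X(φU), φW) = -h(∇_X U, W) + Σᵢ ηⁱ(U) h(X, W)`. Applying this twice and
using `ηⁱ ∘ φ = 0` shows `(∇_X h)(φ²Y, φ²Z) = (∇_X h)(Y, Z) + Σᵢ {ηⁱ(Y) h(X, Z) + ηⁱ(Z) h(X, Y)}`,
so η-parallelism at `(φY, φZ)` is exactly the claimed formula at `(Y, Z)`; conversely the formula
at `(φY, φZ)` has vanishing right-hand side. Passing through `φ²` rather than using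
`h(φY, φZ) = -h(Y, Z)` directly avoids any linearity of the normal connection.
-/

open scoped RealInnerProductSpace

section

variable {V : Type*} [NormedAddCommGroup V] [InnerProductSpace ℝ V] {s : ℕ}
  {φ : V →ₗ[ℝ] V} {ξ : Fin s → V} {η : Fin s → V →ₗ[ℝ] ℝ}

structure IsAlmostSContactMetric (φ : V →ₗ[ℝ] V) (ξ : Fin s → V) (η : Fin s → V →ₗ[ℝ] ℝ) :
    Prop where
  phi_phi : ∀ X, φ (φ X) = -X + ∑ i, η i X • ξ i
  eta_xi : ∀ i j, η i (ξ j) = if i = j then (1 : ℝ) else 0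
  inner_phi_phi : ∀ X Y, ⟪φ X, φ Y⟫ = ⟪X, Y⟫ - ∑ i, η i X * η i Y
  eta_eq_inner : ∀ i X, η i X = ⟪X, ξ i⟫

namespace IsAlmostSContactMetric

theorem phi_xi (hφ : IsAlmostSContactMetric φ ξ η) (i : Fin s) : φ (ξ i) = 0 := by
  have hξξ : ⟪ξ i, ξ i⟫ = 1 := by rw [← hφ.eta_eq_inner, hφ.eta_xi, if_pos rfl]
  refine (inner_self_eq_zero (𝕜 := ℝ)).mp ?_
  rw [hφ.inner_phi_phi, hξξ]
  simp [hφ.eta_xi]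

theorem eta_phi (hφ : IsAlmostSContactMetric φ ξ η) (j : Fin s) (Y : V) : η j (φ Y) = 0 := by
  have hφ3 : φ (φ (φ Y)) = -φ Y := by
    simp [hφ.phi_phi Y, map_sum, hφ.phi_xi]
  have hsum : ∑ i, η i (φ Y) • ξ i = 0 := by
    simpa [hφ3] using (hφ.phi_phi (φ Y)).symm
  simpa [hφ.eta_xi] using congrArg (η j) hsum

end IsAlmostSContactMetric

section InvariantSubmanifold

variable {T : Submodule ℝ V} {D : V → V → V} {h : V →ₗ[ℝ] V →ₗ[ℝ] V}

/-- `(∇_X h)(Y, Z)`, with `Dp` the normal connection and `D` the induced connection. -/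
def covDerivSecondFundamentalForm (Dp D : V → V → V) (h : V →ₗ[ℝ] V →ₗ[ℝ] V) (X Y Z : V) : V :=
  Dp X (h Y Z) - h (D X Y) Z - h Y (D X Z)

theorem secondFundamentalForm_covDeriv_phi
    (hφT : ∀ x ∈ T, φ x ∈ T) (hDT : ∀ X ∈ T, ∀ Y ∈ T, D X Y ∈ T)
    (hsymm : ∀ X Y, h X Y = h Y X) (hhξ : ∀ X ∈ T, ∀ i, h X (ξ i) = 0)
    (hhφφ : ∀ X ∈ T, ∀ Y ∈ T, h (φ X) (φ Y) = -(h X Y))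
    (hKenInd : ∀ X ∈ T, ∀ Y ∈ T, D X (φ Y) - φ (D X Y) = ∑ i, (⟪φ X, Y⟫ • ξ i - η i Y • φ X))
    {X U W : V} (hX : X ∈ T) (hU : U ∈ T) (hW : W ∈ T) :
    h (D X (φ U)) (φ W) = -h (D X U) W + ∑ i, η i U • h X W := by
  have hD : D X (φ U) = φ (D X U) + ∑ i, (⟪φ X, U⟫ • ξ i - η i U • φ X) :=
    eq_add_of_sub_eq' (hKenInd X hX U hU)
  have hξφW : ∀ i, h (ξ i) (φ W) = 0 := fun i => (hsymm _ _).trans (hhξ _ (hφT W hW) i)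
  simp [hD, map_sum, hhφφ _ (hDT X hX U hU) W hW, hξφW, hhφφ X hX W hW]

theorem covDerivSecondFundamentalForm_phi_phi (Dp : V → V → V)
    (hφT : ∀ x ∈ T, φ x ∈ T) (hsymm : ∀ X Y, h X Y = h Y X)
    (hhφφ : ∀ X ∈ T, ∀ Y ∈ T, h (φ X) (φ Y) = -(h X Y)) (hηφ : ∀ i Y, η i (φ Y) = 0)
    (hDφ : ∀ X ∈ T, ∀ U ∈ T, ∀ W ∈ T,
      h (D X (φ U)) (φ W) = -h (D X U) W + ∑ i, η i U • h X W)
    {X Y Z : V} (hX : X ∈ T) (hY : Y ∈ T) (hZ : Z ∈ T) :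
    covDerivSecondFundamentalForm Dp D h X (φ (φ Y)) (φ (φ Z)) =
      covDerivSecondFundamentalForm Dp D h X Y Z + ∑ i, (η i Y • h X Z + η i Z • h X Y) := by
  have hφφ : h (φ (φ Y)) (φ (φ Z)) = h Y Z := by
    rw [hhφφ _ (hφT Y hY) _ (hφT Z hZ), hhφφ Y hY Z hZ, neg_neg]
  have hDφφ : ∀ U ∈ T, ∀ W ∈ T,
      h (D X (φ (φ U))) (φ (φ W)) = h (D X U) W - ∑ i, η i U • h X W := fun U hU W hW => by
    rw [hDφ X hX _ (hφT U hU) _ (hφT W hW), hDφ X hX U hU W hW]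
    simp [hηφ, sub_eq_neg_add]
  unfold covDerivSecondFundamentalForm
  rw [hφφ, hDφφ Y hY Z hZ, hsymm (φ (φ Y)), hDφφ Z hZ Y hY, hsymm (D X Z) Y,
    Finset.sum_add_distrib]
  abel

end InvariantSubmanifold

end

theorem invariant_submanifold_eta_parallel_general
    {V : Type*} [NormedAddCommGroup V] [InnerProductSpace ℝ V]
    (s : ℕ) (φ : V →ₗ[ℝ] V) (ξ : Fin s → V) (η : Fin s → V →ₗ[ℝ] ℝ)
    (T : Submodule ℝ V)
    (D : V → V → V) (h : V →ₗ[ℝ] V →ₗ[ℝ] V)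
    -- almost s-contact metric structure on the ambient manifold
    (hφ2 : ∀ X, φ (φ X) = -X + ∑ i, η i X • ξ i)
    (hηξ : ∀ i j, η i (ξ j) = if i = j then (1 : ℝ) else 0)
    (hg : ∀ X Y, ⟪φ X, φ Y⟫ = ⟪X, Y⟫ - ∑ i, η i X * η i Y)
    (hηg : ∀ i X, η i X = ⟪X, ξ i⟫)
    -- M is an invariant submanifold : φ preserves tangent (and normal) parts, ξᵢ tangent
    (hφT : ∀ x ∈ T, φ x ∈ T)
    (hDT : ∀ X ∈ T, ∀ Y ∈ T, D X Y ∈ T)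
    (hsymm : ∀ X Y, h X Y = h Y X)
    (Dp : V → V → V)
    (hhξ : ∀ X ∈ T, ∀ i, h X (ξ i) = 0)
    (hhφφ : ∀ X ∈ T, ∀ Y ∈ T, h (φ X) (φ Y) = -(h X Y))
    (hKenInd : ∀ X ∈ T, ∀ Y ∈ T, D X (φ Y) - φ (D X Y) = ∑ i, (⟪φ X, Y⟫ • ξ i - η i Y • φ X))
    : (∀ X ∈ T, ∀ Y ∈ T, ∀ Z ∈ T,
        Dp X (h (φ Y) (φ Z)) - h (D X (φ Y)) (φ Z) - h (φ Y) (D X (φ Z)) = 0) ↔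
      (∀ X ∈ T, ∀ Y ∈ T, ∀ Z ∈ T,
        Dp X (h Y Z) - h (D X Y) Z - h Y (D X Z) =
          -∑ i, (η i Y • h X Z + η i Z • h X Y)) := by
  have hηφ := IsAlmostSContactMetric.eta_phi ⟨hφ2, hηξ, hg, hηg⟩
  have hDφ : ∀ X ∈ T, ∀ U ∈ T, ∀ W ∈ T,
      h (D X (φ U)) (φ W) = -h (D X U) W + ∑ i, η i U • h X W := fun X hX U hU W hW =>
    secondFundamentalForm_covDeriv_phi hφT hDT hsymm hhξ hhφφ hKenInd hX hU hW
  constructor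
  · intro hpar X hX Y hY Z hZ
    refine eq_neg_of_add_eq_zero_left ?_
    change covDerivSecondFundamentalForm Dp D h X Y Z + _ = 0
    rw [← covDerivSecondFundamentalForm_phi_phi Dp hφT hsymm hhφφ hηφ hDφ hX hY hZ]
    exact hpar X hX (φ Y) (hφT Y hY) (φ Z) (hφT Z hZ)
  · intro hformula X hX Y hY Z hZ
    simpa [hηφ] using hformula X hX (φ Y) (hφT Y hY) (φ Z) (hφT Z hZ)

/-- Invariant submanifold of a generalized Kenmotsu manifold: `h` is η-parallel, i.e. `(∇_X h)(φY, φZ) = 0`, iff `(∇_X h)(Y,Z) = -Σᵢ{ηⁱ(Y)h(X,Z) + ηⁱ(Z)h(X,Y)}`. -/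
theorem invariant_submanifold_eta_parallel
    {V : Type*} [NormedAddCommGroup V] [InnerProductSpace ℝ V]
    (s : ℕ) (φ : V →ₗ[ℝ] V) (ξ : Fin s → V) (η : Fin s → V →ₗ[ℝ] ℝ)
    (T : Submodule ℝ V)
    (Dbar D : V → V → V) (h : V →ₗ[ℝ] V →ₗ[ℝ] V)
    -- almost s-contact metric structure on the ambient manifold
    (hφ2 : ∀ X, φ (φ X) = -X + ∑ i, η i X • ξ i)
    (hηξ : ∀ i j, η i (ξ j) = if i = j then (1 : ℝ) else 0)
    (hg : ∀ X Y, ⟪φ X, φ Y⟫ = ⟪X, Y⟫ - ∑ i, η i X * η i Y)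
    (hηg : ∀ i X, η i X = ⟪X, ξ i⟫)
    -- generalized Kenmotsu condition : (∇̄_X φ) Y = Σᵢ { g(φX,Y)ξᵢ - ηⁱ(Y)φX }
    (hKen : ∀ X Y, Dbar X (φ Y) - φ (Dbar X Y) =
      ∑ i, (⟪φ X, Y⟫ • ξ i - η i Y • φ X))
    -- M is an invariant submanifold : φ preserves tangent (and normal) parts, ξᵢ tangent
    (hφT : ∀ x ∈ T, φ x ∈ T)
    (hφN : ∀ x, (∀ Z ∈ T, ⟪x, Z⟫ = 0) → ∀ Z ∈ T, ⟪φ x, Z⟫ = 0)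
    (hξT : ∀ i, ξ i ∈ T)
    -- Gauss formula : ∇̄_X Y = ∇_X Y + h(X,Y), with ∇ tangential and h normal valued
    (hGauss : ∀ X ∈ T, ∀ Y ∈ T, Dbar X Y = D X Y + h X Y)
    (hDT : ∀ X ∈ T, ∀ Y ∈ T, D X Y ∈ T)
    (hhN : ∀ X ∈ T, ∀ Y ∈ T, ∀ Z ∈ T, ⟪h X Y, Z⟫ = 0)
    (hsymm : ∀ X Y, h X Y = h Y X)
    (Dp : V → V → V)
    (hhξ : ∀ X ∈ T, ∀ i, h X (ξ i) = 0)
    (hDp0 : ∀ X, Dp X 0 = 0)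
    (hhφφ : ∀ X ∈ T, ∀ Y ∈ T, h (φ X) (φ Y) = -(h X Y))
    (hKenInd : ∀ X ∈ T, ∀ Y ∈ T, D X (φ Y) - φ (D X Y) = ∑ i, (⟪φ X, Y⟫ • ξ i - η i Y • φ X))
    : (∀ X ∈ T, ∀ Y ∈ T, ∀ Z ∈ T,
        Dp X (h (φ Y) (φ Z)) - h (D X (φ Y)) (φ Z) - h (φ Y) (D X (φ Z)) = 0) ↔
      (∀ X ∈ T, ∀ Y ∈ T, ∀ Z ∈ T,
        Dp X (h Y Z) - h (D X Y) Z - h Y (D X Z) =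
          -∑ i, (η i Y • h X Z + η i Z • h X Y)) :=
  invariant_submanifold_eta_parallel_general s φ ξ η T D h hφ2 hηξ hg hηg hφT hDT hsymm Dp hhξ hhφφ
    hKenInd
end

section
/- Let M be an invariant submanifold of a generalized Kenmotsu manifold M̄. Then for any tangent vector field X: g(R(X, φX)φX, X) = g(R̄(X, φX)φX, X) - 2 g(h(X,X), h(X,X)), relating the φ-sectional curvatures of M and M̄. -/
open scoped RealInnerProductSpace

/-!
Evaluate the Gauss equation at `(X, φX, φX, X)`. Invariance gives `h(φX, X) = h(X, φX) = φ h(X,X)`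
and `h(φX, φX) = -h(X,X)`, so the second fundamental form contributes
`g(φ h(X,X), φ h(X,X)) + g(h(X,X), h(X,X))`, and since `h(X,X)` is normal, where `φ` is an isometry,
this is `2 g(h(X,X), h(X,X))`.
-/

section InvariantSubmanifold

variable {V : Type*} [NormedAddCommGroup V] [InnerProductSpace ℝ V]
  {φ : V →ₗ[ℝ] V} {T : Submodule ℝ V} {h : V →ₗ[ℝ] V →ₗ[ℝ] V} {Rbar R : V → V → V → V}

lemma inner_curvature_phi_sectional_eq_add
    (hGaussEq : ∀ X ∈ T, ∀ Y ∈ T, ∀ Z ∈ T, ∀ W ∈ T,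
      ⟪Rbar X Y Z, W⟫ = ⟪R X Y Z, W⟫ + ⟪h Y W, h X Z⟫ - ⟪h X W, h Y Z⟫)
    (hφT : ∀ x ∈ T, φ x ∈ T)
    (hsymm : ∀ X Y, h X Y = h Y X)
    (hhφφ : ∀ X ∈ T, ∀ Y ∈ T, h (φ X) (φ Y) = -(h X Y))
    (hhφ : ∀ X ∈ T, ∀ Y ∈ T, h (φ X) Y = φ (h X Y))
    {X : V} (hX : X ∈ T) :
    ⟪Rbar X (φ X) (φ X), X⟫ =
      ⟪R X (φ X) (φ X), X⟫ + ⟪φ (h X X), φ (h X X)⟫ + ⟪h X X, h X X⟫ := by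
  rw [hGaussEq X hX (φ X) (hφT X hX) (φ X) (hφT X hX) X hX, hsymm X (φ X), hhφ X hX X hX,
    hhφφ X hX X hX, inner_neg_right, sub_neg_eq_add]

end InvariantSubmanifold

theorem invariant_submanifold_phi_sectional_general
    {V : Type*} [NormedAddCommGroup V] [InnerProductSpace ℝ V]
    (φ : V →ₗ[ℝ] V)
    (T : Submodule ℝ V)
    (h : V →ₗ[ℝ] V →ₗ[ℝ] V)
    -- M is an invariant submanifold : φ preserves tangent (and normal) parts, ξᵢ tangent
    (hφT : ∀ x ∈ T, φ x ∈ T)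
    -- Gauss formula : ∇̄_X Y = ∇_X Y + h(X,Y), with ∇ tangential and h normal valued
    (hhN : ∀ X ∈ T, ∀ Y ∈ T, ∀ Z ∈ T, ⟪h X Y, Z⟫ = 0)
    (hsymm : ∀ X Y, h X Y = h Y X)
    (Rbar R : V → V → V → V)
    -- Gauss equation
    (hGaussEq : ∀ X ∈ T, ∀ Y ∈ T, ∀ Z ∈ T, ∀ W ∈ T,
      ⟪Rbar X Y Z, W⟫ = ⟪R X Y Z, W⟫ + ⟪h Y W, h X Z⟫ - ⟪h X W, h Y Z⟫)
    (hhφφ : ∀ X ∈ T, ∀ Y ∈ T, h (φ X) (φ Y) = -(h X Y))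
    (hhφ : ∀ X ∈ T, ∀ Y ∈ T, h (φ X) Y = φ (h X Y))
    (hφiso : ∀ U W, (∀ Z ∈ T, ⟪U, Z⟫ = 0) → (∀ Z ∈ T, ⟪W, Z⟫ = 0) → ⟪φ U, φ W⟫ = ⟪U, W⟫)
    : ∀ X ∈ T,
      ⟪R X (φ X) (φ X), X⟫ = ⟪Rbar X (φ X) (φ X), X⟫ - 2 * ⟪h X X, h X X⟫ := by
  intro X hX
  have hnormal : ∀ Z ∈ T, ⟪h X X, Z⟫ = 0 := hhN X hX X hX
  rw [inner_curvature_phi_sectional_eq_add hGaussEq hφT hsymm hhφφ hhφ hX,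
    hφiso _ _ hnormal hnormal]
  ring

/-- Invariant submanifold of a generalized Kenmotsu manifold: `g(R(X,φX)φX,X) = g(R̄(X,φX)φX,X) - 2 g(h(X,X),h(X,X))`. -/
theorem invariant_submanifold_phi_sectional
    {V : Type*} [NormedAddCommGroup V] [InnerProductSpace ℝ V]
    (s : ℕ) (φ : V →ₗ[ℝ] V) (ξ : Fin s → V) (η : Fin s → V →ₗ[ℝ] ℝ)
    (T : Submodule ℝ V)
    (Dbar D : V → V → V) (h : V →ₗ[ℝ] V →ₗ[ℝ] V)
    -- almost s-contact metric structure on the ambient manifold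
    (hφ2 : ∀ X, φ (φ X) = -X + ∑ i, η i X • ξ i)
    (hηξ : ∀ i j, η i (ξ j) = if i = j then (1 : ℝ) else 0)
    (hg : ∀ X Y, ⟪φ X, φ Y⟫ = ⟪X, Y⟫ - ∑ i, η i X * η i Y)
    (hηg : ∀ i X, η i X = ⟪X, ξ i⟫)
    -- generalized Kenmotsu condition : (∇̄_X φ) Y = Σᵢ { g(φX,Y)ξᵢ - ηⁱ(Y)φX }
    (hKen : ∀ X Y, Dbar X (φ Y) - φ (Dbar X Y) =
      ∑ i, (⟪φ X, Y⟫ • ξ i - η i Y • φ X))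
    -- M is an invariant submanifold : φ preserves tangent (and normal) parts, ξᵢ tangent
    (hφT : ∀ x ∈ T, φ x ∈ T)
    (hφN : ∀ x, (∀ Z ∈ T, ⟪x, Z⟫ = 0) → ∀ Z ∈ T, ⟪φ x, Z⟫ = 0)
    (hξT : ∀ i, ξ i ∈ T)
    -- Gauss formula : ∇̄_X Y = ∇_X Y + h(X,Y), with ∇ tangential and h normal valued
    (hGauss : ∀ X ∈ T, ∀ Y ∈ T, Dbar X Y = D X Y + h X Y)
    (hDT : ∀ X ∈ T, ∀ Y ∈ T, D X Y ∈ T)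
    (hhN : ∀ X ∈ T, ∀ Y ∈ T, ∀ Z ∈ T, ⟪h X Y, Z⟫ = 0)
    (hsymm : ∀ X Y, h X Y = h Y X)
    (Rbar R : V → V → V → V)
    -- Gauss equation
    (hGaussEq : ∀ X ∈ T, ∀ Y ∈ T, ∀ Z ∈ T, ∀ W ∈ T,
      ⟪Rbar X Y Z, W⟫ = ⟪R X Y Z, W⟫ + ⟪h Y W, h X Z⟫ - ⟪h X W, h Y Z⟫)
    (hhφφ : ∀ X ∈ T, ∀ Y ∈ T, h (φ X) (φ Y) = -(h X Y))
    (hhφ : ∀ X ∈ T, ∀ Y ∈ T, h (φ X) Y = φ (h X Y))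
    (hφiso : ∀ U W, (∀ Z ∈ T, ⟪U, Z⟫ = 0) → (∀ Z ∈ T, ⟪W, Z⟫ = 0) → ⟪φ U, φ W⟫ = ⟪U, W⟫)
    : ∀ X ∈ T,
      ⟪R X (φ X) (φ X), X⟫ = ⟪Rbar X (φ X) (φ X), X⟫ - 2 * ⟪h X X, h X X⟫ :=
  invariant_submanifold_phi_sectional_general φ T h hφT hhN hsymm Rbar R hGaussEq hhφφ hhφ hφiso
end
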